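/- For every index j ∈ {1, …, p}, the diagonal entries of Σ_c and Ω_c satisfy (Σ_c)_{jj} (Ω_c)_{jj} ≥ (1 − 1/p)². -/

import Mathlib

/-!
With `g = G e_j` and `z = e_j − ((Ω₀ 1)_j / 1ᵀΩ₀1) 1`, one has `(Σ_c)_{jj} = gᵀ Σ₀ g` and
`(Ω_c)_{jj} = zᵀ Ω₀ z`. Since `G 1 = 0`, `gᵀ z = gᵀ e_j = 1 − 1/p`, and the Cauchy–Schwarz
inequality for the dual pair of forms `Σ₀ = Ω₀⁻¹`, `Ω₀` gives `(gᵀ z)² ≤ (gᵀ Σ₀ g)(zᵀ Ω₀ z)`.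
-/

open Matrix

noncomputable section

/-- The all-ones vector in `ℝ^p`. -/
def onesV (p : ℕ) : Fin p → ℝ := fun _ => 1

/-- The centering matrix `G = I_p − p⁻¹ 1_p 1_pᵀ`. -/
def Gmat (p : ℕ) : Matrix (Fin p) (Fin p) ℝ :=
  1 - (p : ℝ)⁻¹ • Matrix.vecMulVec (onesV p) (onesV p)

/-- The compositional precision matrix `Ω_c = Ω₀ − Ω₀ 1_p 1_pᵀ Ω₀ / (1_pᵀ Ω₀ 1_p)`. -/
def OmegaC {p : ℕ} (Ω : Matrix (Fin p) (Fin p) ℝ) : Matrix (Fin p) (Fin p) ℝ :=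
  Ω - (onesV p ⬝ᵥ Ω.mulVec (onesV p))⁻¹ •
    Matrix.vecMulVec (Ω.mulVec (onesV p)) (Matrix.vecMul (onesV p) Ω)

/-- The centered log-ratio covariance matrix `Σ_c = G Σ₀ G` with `Σ₀ = Ω₀⁻¹`. -/
def SigmaC {p : ℕ} (Ω : Matrix (Fin p) (Fin p) ℝ) : Matrix (Fin p) (Fin p) ℝ :=
  Gmat p * Ω⁻¹ * Gmat p

/-- The entrywise `ℓ∞`-norm `‖A‖_max = max_{i,j} |a_ij|`. -/
def maxNorm {p : ℕ} (A : Matrix (Fin p) (Fin p) ℝ) : ℝ := ⨆ i, ⨆ j, |A i j|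

/-- The matrix `ℓ1`-norm `‖A‖_{L1} = max_j Σ_i |a_ij|`. -/
def l1Norm {p : ℕ} (A : Matrix (Fin p) (Fin p) ℝ) : ℝ := ⨆ j, ∑ i, |A i j|

namespace Matrix

variable {n : Type*} [Fintype n] [DecidableEq n] {M : Matrix n n ℝ}

theorem PosSemidef.dotProduct_mulVec_sq_le (hM : M.PosSemidef) (x y : n → ℝ) :
    (x ⬝ᵥ M *ᵥ y) ^ 2 ≤ (x ⬝ᵥ M *ᵥ x) * (y ⬝ᵥ M *ᵥ y) := by
  have hsymm : M.IsSymm := isHermitian_iff_isSymm.mp hM.isHermitian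
  simpa only [toLinearMap₂'_apply'] using
    LinearMap.BilinForm.apply_sq_le_of_symm (toLinearMap₂' ℝ M)
      (fun x ↦ by simpa only [toLinearMap₂'_apply', star_trivial] using
        hM.dotProduct_mulVec_nonneg x)
      (LinearMap.isSymm_def.mpr fun x y ↦ by
        rw [RingHom.id_apply, toLinearMap₂'_apply', toLinearMap₂'_apply', dotProduct_mulVec,
          ← mulVec_transpose, hsymm.eq, dotProduct_comm]) x y

theorem PosDef.dotProduct_sq_le (hM : M.PosDef) (x y : n → ℝ) :
    (x ⬝ᵥ y) ^ 2 ≤ (x ⬝ᵥ M⁻¹ *ᵥ x) * (y ⬝ᵥ M *ᵥ y) := by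
  have hy : M⁻¹ *ᵥ M *ᵥ y = y := by
    rw [mulVec_mulVec, nonsing_inv_mul _ ((isUnit_iff_isUnit_det M).mp hM.isUnit), one_mulVec]
  simpa only [hy, dotProduct_comm (M *ᵥ y) y] using
    hM.inv.posSemidef.dotProduct_mulVec_sq_le x (M *ᵥ y)

end Matrix

theorem Gmat_transpose (p : ℕ) : (Gmat p)ᵀ = Gmat p := by
  simp only [Gmat, transpose_sub, transpose_one, transpose_smul, transpose_vecMulVec]

theorem Gmat_mulVec_onesV (p : ℕ) : Gmat p *ᵥ onesV p = 0 := by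
  ext i
  have hp : (p : ℝ) ≠ 0 := by have := i.pos; positivity
  simp [Gmat, sub_mulVec, smul_mulVec, vecMulVec_mulVec, onesV, dotProduct, hp]

theorem Gmat_row_dotProduct_single_sub_smul_onesV {p : ℕ} (j : Fin p) (c : ℝ) :
    Gmat p j ⬝ᵥ (Pi.single j 1 - c • onesV p) = 1 - (p : ℝ)⁻¹ := by
  have hrow : Gmat p j ⬝ᵥ onesV p = 0 := congr_fun (Gmat_mulVec_onesV p) j
  rw [dotProduct_sub, dotProduct_smul, hrow, smul_zero, sub_zero, dotProduct_single, mul_one]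
  simp [Gmat, vecMulVec_apply, onesV]

theorem SigmaC_apply_self {p : ℕ} (Ω : Matrix (Fin p) (Fin p) ℝ) (j : Fin p) :
    SigmaC Ω j j = Gmat p j ⬝ᵥ Ω⁻¹ *ᵥ Gmat p j := by
  rw [SigmaC, mul_mul_apply, Gmat_transpose]

/-- `e_j` minus its orthogonal projection onto `span {1_p}` for the inner product `xᵀ Ω y`. -/
def singleOrthOnes {p : ℕ} (Ω : Matrix (Fin p) (Fin p) ℝ) (j : Fin p) : Fin p → ℝ :=
  Pi.single j 1 - ((Ω *ᵥ onesV p) j / (onesV p ⬝ᵥ Ω *ᵥ onesV p)) • onesV p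

theorem OmegaC_apply_self {p : ℕ} {Ω : Matrix (Fin p) (Fin p) ℝ} (hΩ : Ω.IsSymm) (j : Fin p) :
    OmegaC Ω j j = singleOrthOnes Ω j ⬝ᵥ Ω *ᵥ singleOrthOnes Ω j := by
  have hrow : onesV p ᵥ* Ω = Ω *ᵥ onesV p := by rw [← vecMul_transpose, hΩ.eq]
  have hcol : onesV p ⬝ᵥ Ω.col j = (Ω *ᵥ onesV p) j := congr_fun hrow j
  simp only [OmegaC, singleOrthOnes, Matrix.sub_apply, Matrix.smul_apply, vecMulVec_apply,
    smul_eq_mul, mulVec_sub, mulVec_smul, sub_dotProduct, dotProduct_sub, smul_dotProduct,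
    dotProduct_smul, single_dotProduct, mulVec_single_one, one_mul, col_apply, hcol, hrow]
  generalize (Ω *ᵥ onesV p) j = u, onesV p ⬝ᵥ Ω *ᵥ onesV p = s
  rcases eq_or_ne s 0 with hs | hs
  · simp [hs]
  · field_simp
    ring

theorem diag_product_lower_bound_general (p : ℕ)
    (Ω₀ : Matrix (Fin p) (Fin p) ℝ) (hΩ₀ : Ω₀.PosDef) (j : Fin p) :
    (1 - 1 / (p : ℝ)) ^ 2 ≤ SigmaC Ω₀ j j * OmegaC Ω₀ j j := by
  have hsymm : Ω₀.IsSymm := isHermitian_iff_isSymm.mp hΩ₀.isHermitian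
  calc (1 - 1 / (p : ℝ)) ^ 2 = (Gmat p j ⬝ᵥ singleOrthOnes Ω₀ j) ^ 2 := by
        rw [singleOrthOnes, Gmat_row_dotProduct_single_sub_smul_onesV, one_div]
    _ ≤ (Gmat p j ⬝ᵥ Ω₀⁻¹ *ᵥ Gmat p j) * (singleOrthOnes Ω₀ j ⬝ᵥ Ω₀ *ᵥ singleOrthOnes Ω₀ j) :=
        hΩ₀.dotProduct_sq_le _ _
    _ = SigmaC Ω₀ j j * OmegaC Ω₀ j j := by
        rw [SigmaC_apply_self, OmegaC_apply_self hsymm]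

/-- `(Σ_c)_{jj} (Ω_c)_{jj} ≥ (1 − 1/p)²` for every `j`. -/
theorem diag_product_lower_bound (p : ℕ) (hp : 2 ≤ p)
    (Ω₀ : Matrix (Fin p) (Fin p) ℝ) (hΩ₀ : Ω₀.PosDef) (j : Fin p) :
    (1 - 1 / (p : ℝ)) ^ 2 ≤ SigmaC Ω₀ j j * OmegaC Ω₀ j j :=
  diag_product_lower_bound_general p Ω₀ hΩ₀ j

end
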